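/- arXiv:1204.1878 — 5 statements merged into one kernel-verified Lean document; each statement's English description precedes it below -/
import Mathlib

section
/- Let G = ℝ^m ⋉_φ ℝ^n be a semidirect product where φ : ℝ^m → GL(n,ℝ) acts semisimply (φ(ℝ^m) is simultaneously diagonalizable over ℂ). Then there is a decomposition ℝ^n = V₁ ⊕ V₂ into φ-invariant subspaces such that V₁ is the maximal trivial ℝ^m-submodule, G ≅ V₁ × (ℝ^m ⋉ V₂), and the commutator subgroup [G,G] has dimension equal to dim V₂. -/
/-!
An operator `f` with `ker f ⊓ range f = ⊥` (e.g. `φ a - 1` for semisimple `φ a`) splits any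
`f`-invariant decomposition `V = p ⊕ q` further into `V = (p ⊓ ker f) ⊕ (q ⊔ range f)`. Adding the
commuting operators `φ a - 1` one at a time therefore keeps the common kernel complementary to the
sum of the ranges. Finitely many `a` already produce the whole sum of ranges `V₂`, since `V` is
Noetherian; the common kernel `K` of those is then the fixed space, because `φ b x - x` lies in
`K ⊓ V₂ = ⊥` for every `x ∈ K`.
-/

open LinearMap Submodule Module Module.End

namespace Module.End

section CommRing

variable {R M : Type*} [CommRing R] [AddCommGroup M] [Module R M]

lemma iInf_mem_invtSubmodule {ι : Sort*} {g : End R M} {p : ι → Submodule R M}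
    (hp : ∀ i, p i ∈ g.invtSubmodule) : (⨅ i, p i) ∈ g.invtSubmodule := by
  rw [mem_invtSubmodule, comap_iInf]
  exact iInf_mono hp

lemma iSup_mem_invtSubmodule {ι : Sort*} {g : End R M} {p : ι → Submodule R M}
    (hp : ∀ i, p i ∈ g.invtSubmodule) : (⨆ i, p i) ∈ g.invtSubmodule := by
  rw [mem_invtSubmodule_iff_map_le, Submodule.map_iSup]
  exact iSup_mono fun i => (mem_invtSubmodule_iff_map_le _).mp (hp i)

lemma ker_mem_invtSubmodule_of_commute {f g : End R M} (h : Commute g f) :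
    ker f ∈ g.invtSubmodule := fun x (hx : f x = 0) => by
  change f (g x) = 0
  rw [← mul_apply, ← h.eq, mul_apply, hx, map_zero]

lemma range_mem_invtSubmodule_of_commute {f g : End R M} (h : Commute g f) :
    range f ∈ g.invtSubmodule := by
  rintro _ ⟨x, rfl⟩
  exact ⟨g x, by rw [← mul_apply, ← h.eq, mul_apply]⟩

lemma IsSemisimple.disjoint_ker_range {f : End R M} (hf : f.IsSemisimple) :
    Disjoint (ker f) (range f) := by
  obtain ⟨q, hq, hcompl⟩ :=
    isSemisimple_iff.mp hf (ker f) (ker_mem_invtSubmodule_of_commute (Commute.refl f))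
  refine hcompl.disjoint.mono_right ?_
  rintro _ ⟨x, rfl⟩
  obtain ⟨k, hk, c, hc, rfl⟩ := mem_sup.mp (hcompl.sup_eq_top ▸ mem_top : x ∈ ker f ⊔ q)
  rw [map_add, mem_ker.mp hk, zero_add]
  exact hq hc

end CommRing

section Field

variable {K V : Type*} [Field K] [AddCommGroup V] [Module K V] [FiniteDimensional K V]

lemma isCompl_ker_range_of_disjoint {f : End K V} (h : Disjoint (ker f) (range f)) :
    IsCompl (ker f) (range f) :=
  (isCompl_iff_disjoint _ _ (by rw [add_comm, finrank_range_add_finrank_ker])).mpr h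

lemma le_inf_ker_sup_range {f : End K V} {p : Submodule K V} (hp : p ∈ f.invtSubmodule)
    (hf : Disjoint (ker f) (range f)) : p ≤ p ⊓ ker f ⊔ range f := by
  have hker : ∀ x : p, x ∈ ker (f.restrict hp) ↔ (x : V) ∈ ker f := fun x => by
    rw [mem_ker, mem_ker, ← Subtype.val_inj]
    rfl
  have hfp : Disjoint (ker (f.restrict hp)) (range (f.restrict hp)) := by
    rw [disjoint_def]
    rintro x hx ⟨y, rfl⟩
    exact Subtype.ext (disjoint_def.mp hf _ ((hker _).mp hx) ⟨y, rfl⟩)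
  intro x hx
  obtain ⟨k, hk, _, ⟨y, rfl⟩, hxy⟩ := mem_sup.mp
    ((isCompl_ker_range_of_disjoint hfp).sup_eq_top ▸ mem_top :
      (⟨x, hx⟩ : p) ∈ ker (f.restrict hp) ⊔ range (f.restrict hp))
  obtain rfl : (k : V) + f y = x := congrArg Subtype.val hxy
  exact add_mem_sup ⟨k.2, (hker k).mp hk⟩ ⟨y, rfl⟩

lemma isCompl_inf_ker_sup_range {f : End K V} {p q : Submodule K V} (hpq : IsCompl p q)
    (hp : p ∈ f.invtSubmodule) (hq : q ∈ f.invtSubmodule) (hf : Disjoint (ker f) (range f)) :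
    IsCompl (p ⊓ ker f) (q ⊔ range f) := by
  constructor
  · rw [disjoint_def]
    rintro x ⟨hxp, hxk⟩ hx
    obtain ⟨r, hr, _, ⟨y, rfl⟩, rfl⟩ := mem_sup.mp hx
    obtain ⟨yp, hyp, yq, hyq, rfl⟩ := mem_sup.mp (hpq.sup_eq_top ▸ mem_top : y ∈ p ⊔ q)
    have hq_part : r + f yq = 0 := by
      refine disjoint_def.mp hpq.disjoint _ ?_ (q.add_mem hr (hq hyq))
      convert p.sub_mem hxp (hp hyp) using 1
      rw [map_add]
      abel
    have hx_eq : r + f (yp + yq) = f yp := by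
      rw [map_add, ← sub_eq_zero, ← hq_part]
      abel
    rw [hx_eq] at hxk ⊢
    exact disjoint_def.mp hf _ hxk ⟨yp, rfl⟩
  · rw [codisjoint_iff, eq_top_iff, ← hpq.sup_eq_top]
    calc p ⊔ q ≤ p ⊓ ker f ⊔ range f ⊔ q := sup_le_sup_right (le_inf_ker_sup_range hp hf) q
      _ = p ⊓ ker f ⊔ (q ⊔ range f) := by rw [sup_assoc, sup_comm (range f)]

variable {ι : Type*} {f : ι → End K V}

lemma isCompl_biInf_ker_biSup_range (hcomm : ∀ i j, Commute (f i) (f j))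
    (hf : ∀ i, Disjoint (ker (f i)) (range (f i))) (s : Finset ι) :
    IsCompl (⨅ i ∈ s, ker (f i)) (⨆ i ∈ s, range (f i)) := by
  classical
  induction s using Finset.induction_on with
  | empty => simpa using isCompl_top_bot
  | insert j s _ ih =>
    rw [Finset.iInf_insert, Finset.iSup_insert, inf_comm, sup_comm]
    exact isCompl_inf_ker_sup_range ih
      (iInf_mem_invtSubmodule fun i => iInf_mem_invtSubmodule fun _ =>
        ker_mem_invtSubmodule_of_commute (hcomm j i))
      (iSup_mem_invtSubmodule fun i => iSup_mem_invtSubmodule fun _ =>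
        range_mem_invtSubmodule_of_commute (hcomm j i))
      (hf j)

lemma isCompl_iInf_ker_iSup_range (hcomm : ∀ i j, Commute (f i) (f j))
    (hf : ∀ i, Disjoint (ker (f i)) (range (f i))) :
    IsCompl (⨅ i, ker (f i)) (⨆ i, range (f i)) := by
  obtain ⟨s, hs⟩ := CompleteLattice.IsCompactElement.exists_finset_of_le_iSup _
    ((fg_iff_compact _).mp (IsNoetherian.noetherian (⨆ i, range (f i)))) _ le_rfl
  have hcompl := isCompl_biInf_ker_biSup_range hcomm hf s
  have hsup : ⨆ i ∈ s, range (f i) = ⨆ i, range (f i) :=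
    le_antisymm (iSup₂_le fun i _ => le_iSup (fun i => range (f i)) i) hs
  have hinf : ⨅ i ∈ s, ker (f i) = ⨅ i, ker (f i) := by
    refine le_antisymm (le_iInf fun j x hx => mem_ker.mpr ?_) (le_iInf₂ fun i _ => iInf_le _ i)
    refine disjoint_def.mp hcompl.disjoint _ ?_ (hsup ▸ mem_iSup_of_mem j ⟨x, rfl⟩)
    exact iInf_mem_invtSubmodule (fun i => iInf_mem_invtSubmodule fun _ =>
      ker_mem_invtSubmodule_of_commute (hcomm j i)) hx
  rwa [← hsup, ← hinf]

end Field

end Module.End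

lemma LinearEquiv.map_eq_of_mem_invtSubmodule {K V : Type*} [Field K] [AddCommGroup V]
    [Module K V] [FiniteDimensional K V] (e : V ≃ₗ[K] V) {p : Submodule K V}
    (hp : p ∈ Module.End.invtSubmodule (e : Module.End K V)) : p.map (e : Module.End K V) = p :=
  eq_of_le_of_finrank_eq ((Module.End.mem_invtSubmodule_iff_map_le _).mp hp)
    (LinearEquiv.finrank_map_eq e p)

/-- For `G = ℝ^m ⋉_φ ℝ^n` with `φ` a semisimple action, there is a
decomposition `ℝ^n = V₁ ⊕ V₂` into `φ`-invariant subspaces with `V₁` the maximal trivial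
submodule (the common fixed subspace), so that `G ≅ V₁ × (ℝ^m ⋉ V₂)`, and the commutator
subgroup `[G,G]` — the span of the vectors `φ(a)v − v` — equals `V₂` (in particular
`dim [G,G] = dim V₂`). -/
theorem semidirect_product_splitting_and_commutator
    (m n : ℕ) (φ : (Fin m → ℝ) → ((Fin n → ℝ) ≃ₗ[ℝ] (Fin n → ℝ)))
    (hφ : ∀ a b, φ (a + b) = φ a * φ b)
    (hss : ∀ a, Module.End.IsSemisimple (φ a : (Fin n → ℝ) →ₗ[ℝ] (Fin n → ℝ))) :
    ∃ V₁ V₂ : Submodule ℝ (Fin n → ℝ),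
      (V₁ : Set (Fin n → ℝ)) = {v | ∀ a, φ a v = v} ∧
      IsCompl V₁ V₂ ∧
      (∀ a, V₂.map (φ a : (Fin n → ℝ) →ₗ[ℝ] (Fin n → ℝ)) = V₂) ∧
      Submodule.span ℝ {x : Fin n → ℝ | ∃ a v, x = φ a v - v} = V₂ := by
  let g a : Module.End ℝ (Fin n → ℝ) := φ a
  have hcomm a b : Commute (g a) (g b) := by
    simp only [g, Commute, SemiconjBy, ← LinearEquiv.coe_toLinearMap_mul, ← hφ, add_comm]
  have hcomm_sub a b : Commute (g a - 1) (g b - 1) :=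
    ((hcomm a b).sub_right (.one_right _)).sub_left ((Commute.one_left _).sub_right (.one_right _))
  have hdisj a : Disjoint (ker (g a - 1)) (range (g a - 1)) :=
    IsSemisimple.disjoint_ker_range <| by
      simpa using (isSemisimple_sub_algebraMap_iff (μ := 1)).mpr (hss a)
  have hspan : span ℝ {x | ∃ a v, x = φ a v - v} = ⨆ a, range (g a - 1) := by
    have : {x | ∃ a v, x = φ a v - v} = ⋃ a, (range (g a - 1) : Set (Fin n → ℝ)) := by
      ext; simp [g, eq_comm]
    rw [this, span_iUnion]
    simp only [span_eq]
  refine ⟨⨅ a, ker (g a - 1), ⨆ a, range (g a - 1), ?_,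
    isCompl_iInf_ker_iSup_range hcomm_sub hdisj,
    fun a => (φ a).map_eq_of_mem_invtSubmodule (iSup_mem_invtSubmodule fun b =>
      range_mem_invtSubmodule_of_commute ((hcomm a b).sub_right (.one_right _))), hspan⟩
  ext v
  simp [g, sub_eq_zero]
end

section
/- Let g be the Lie algebra with basis {A₁,…,A_s, B₁,…,B_s, C₁, C₂} whose dual basis {α₁,…,α_s, β₁,…,β_s, γ₁, γ₂} satisfies dα_i = 0, dβ_i = −α_i ∧ β_i, dγ₁ = (1/2)θ ∧ γ₁ + φ̄ ∧ γ₂, dγ₂ = −φ̄ ∧ γ₁ + (1/2)θ ∧ γ₂, where θ = α₁ + ⋯ + α_s and φ̄ = Σ c_i α_i for real constants c_i. Then the 2-form ω = Σᵢ 2 αᵢ ∧ βᵢ + Σ_{i≠j} αᵢ ∧ βⱼ + γ₁ ∧ γ₂ satisfies dω = θ ∧ ω. (That is, ω is a locally conformal symplectic form with Lee form θ.) -/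
open ExteriorAlgebra

local notation "ι" => ExteriorAlgebra.ι ℝ

private lemma ext_swap {V : Type*} [AddCommGroup V] [Module ℝ V] (v w : V) :
    ι v * ι w = -(ι w * ι v) :=
  eq_neg_of_add_eq_zero_left (ExteriorAlgebra.ι_add_mul_swap v w)

set_option maxHeartbeats 1000000 in
/-- In the exterior algebra on degree-one generators
`α_i = ι(a i)`, `β_i = ι(b i)`, `γ₁ = ι c₁`, `γ₂ = ι c₂`, let `D` be an antiderivation
with `Dα_i = 0`, `Dβ_i = −α_i ∧ β_i`, `Dγ₁ = ½θ∧γ₁ + φ̄∧γ₂`, `Dγ₂ = −φ̄∧γ₁ + ½θ∧γ₂`,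
where `θ = ∑ α_i` and `φ̄ = ∑ c_i α_i`.  Then the 2-form
`ω = ∑ᵢ 2 αᵢ∧βᵢ + ∑_{i≠j} αᵢ∧βⱼ + γ₁∧γ₂` satisfies `Dω = θ ∧ ω`;
i.e. `ω` is a locally conformal symplectic form with Lee form `θ`. -/
theorem lck_form_on_OT_type_algebra
    {V : Type*} [AddCommGroup V] [Module ℝ V] (s : ℕ)
    (a b : Fin s → V) (c1 c2 : V) (cc : Fin s → ℝ)
    (D : ExteriorAlgebra ℝ V →ₗ[ℝ] ExteriorAlgebra ℝ V)
    (hLeib : ∀ v w : V, D (ι v * ι w) = D (ι v) * ι w - ι v * D (ι w))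
    (hda : ∀ i, D (ι (a i)) = 0)
    (hdb : ∀ i, D (ι (b i)) = -(ι (a i) * ι (b i)))
    (hdc1 : D (ι c1) =
      (1 / 2 : ℝ) • ((∑ i, ι (a i)) * ι c1) + (∑ i, cc i • ι (a i)) * ι c2)
    (hdc2 : D (ι c2) =
      -((∑ i, cc i • ι (a i)) * ι c1) + (1 / 2 : ℝ) • ((∑ i, ι (a i)) * ι c2)) :
    D ((∑ i, (2 : ℝ) • (ι (a i) * ι (b i))) +
        (∑ i, ∑ j, if i ≠ j then ι (a i) * ι (b j) else 0) + ι c1 * ι c2) =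
      (∑ i, ι (a i)) *
        ((∑ i, (2 : ℝ) • (ι (a i) * ι (b i))) +
          (∑ i, ∑ j, if i ≠ j then ι (a i) * ι (b j) else 0) + ι c1 * ι c2) := by
  classical
  have hsq : ∀ v : V, ι v * ι v = 0 := fun v => ExteriorAlgebra.ι_sq_zero v
  have hite : ∀ (f : Fin s → ExteriorAlgebra ℝ V) (i : Fin s),
      (∑ j, if i ≠ j then f j else 0) = (∑ j, f j) - f i := by
    intro f i
    rw [show (∑ j, if i ≠ j then f j else 0)
        = ∑ j, (f j - if i = j then f j else 0) from
      Finset.sum_congr rfl fun j _ => by by_cases h : i = j <;> simp [h],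
      Finset.sum_sub_distrib, Finset.sum_ite_eq]
    simp
  set t : ExteriorAlgebra ℝ V := ∑ i, ι (a i) with ht
  have htι : t = ι (∑ i, a i) := by simp [ht]
  have htt : t * t = 0 := by rw [htι]; exact hsq _
  set P : ExteriorAlgebra ℝ V := ∑ i, ∑ j, ι (a i) * (ι (a j) * ι (b j)) with hP
  have hQ : ∀ m : ExteriorAlgebra ℝ V, t * m = ∑ k, ι (a k) * m := by
    intro m; rw [ht, Finset.sum_mul]
  have hP2 : ∑ j, t * (ι (a j) * ι (b j)) = P := by
    rw [hP, Finset.sum_comm]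
    exact Finset.sum_congr rfl fun j _ => hQ _
  have hdiag0 : ∀ i : Fin s, ι (a i) * (ι (a i) * ι (b i)) = 0 := by
    intro i; rw [← mul_assoc, hsq, zero_mul]
  -- (1)
  have h1 : D (∑ i, (2 : ℝ) • (ι (a i) * ι (b i))) = 0 := by
    rw [map_sum]
    refine Finset.sum_eq_zero fun i _ => ?_
    rw [map_smul, hLeib, hda, hdb]
    simp [mul_neg, ← mul_assoc, hsq]
  -- (2)
  have h2 : D (∑ i, ∑ j, if i ≠ j then ι (a i) * ι (b j) else 0)
      = ∑ i, ∑ j, if i ≠ j then ι (a i) * (ι (a j) * ι (b j)) else 0 := by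
    rw [map_sum]
    refine Finset.sum_congr rfl fun i _ => ?_
    rw [map_sum]
    refine Finset.sum_congr rfl fun j _ => ?_
    split
    · rw [hLeib, hda, hdb]; simp [mul_neg]
    · simp
  -- (3)
  have h3 : D (ι c1 * ι c2) = t * (ι c1 * ι c2) := by
    have hφ : (∑ i, cc i • ι (a i)) = ι (∑ i, cc i • a i) := by simp
    rw [hLeib, hdc1, hdc2, hφ, htι]
    set S := ∑ i, a i
    set U := ∑ i, cc i • a i
    have e1 : ι c2 * ι c2 = 0 := hsq _
    have e2 : ι c1 * ι U = -(ι U * ι c1) := ext_swap _ _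
    have e3 : ι c1 * ι S = -(ι S * ι c1) := ext_swap _ _
    have k1 : ι c1 * (ι U * ι c1) = 0 := by
      rw [← mul_assoc, e2, neg_mul, mul_assoc, hsq, mul_zero, neg_zero]
    have k2 : ι c1 * (ι S * ι c2) = -(ι S * (ι c1 * ι c2)) := by
      rw [← mul_assoc, e3, neg_mul, mul_assoc]
    have hhalf : (1 / 2 : ℝ) + 1 / 2 = 1 := by norm_num
    rw [add_mul, smul_mul_assoc, mul_assoc (ι U), e1, mul_zero, add_zero,
      mul_add, mul_neg, k1, neg_zero, zero_add, mul_smul_comm, k2, smul_neg,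
      sub_neg_eq_add, mul_assoc, ← add_smul, hhalf, one_smul]
  -- (4) t * first sum
  have h4 : t * (∑ i, (2 : ℝ) • (ι (a i) * ι (b i))) = (2 : ℝ) • P := by
    rw [Finset.mul_sum, ← hP2, Finset.smul_sum]
    exact Finset.sum_congr rfl fun i _ => mul_smul_comm _ _ _
  -- (5) t * second sum
  have h5 : t * (∑ i, ∑ j, if i ≠ j then ι (a i) * ι (b j) else 0) = -P := by
    have hY : (∑ i, ∑ j, if i ≠ j then ι (a i) * ι (b j) else 0)
        = (∑ i, ∑ j, ι (a i) * ι (b j)) - ∑ i, ι (a i) * ι (b i) := by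
      rw [← Finset.sum_sub_distrib]
      exact Finset.sum_congr rfl fun i _ => hite _ i
    have hF : t * (∑ i, ∑ j, ι (a i) * ι (b j)) = 0 := by
      rw [Finset.sum_comm, Finset.mul_sum]
      refine Finset.sum_eq_zero fun j _ => ?_
      rw [← Finset.sum_mul, ← ht, ← mul_assoc, htt, zero_mul]
    rw [hY, mul_sub, hF, Finset.mul_sum, hP2, zero_sub]
  -- (6) the D-image of the second sum equals P
  have h6 : (∑ i, ∑ j, if i ≠ j then ι (a i) * (ι (a j) * ι (b j)) else 0) = P := by
    rw [hP]
    refine Finset.sum_congr rfl fun i _ => ?_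
    rw [hite _ i, hdiag0, sub_zero]
  -- combine
  rw [map_add, map_add, h1, h2, h3, h6, zero_add, mul_add, mul_add, h4, h5]
  rw [two_smul]
  abel
end

section
/- For the Lie algebra g with dual generated by α₁,…,α_s, β₁,…,β_s, γ₁,…,γ_{2t} with differential dα_i = 0, dβ_i = −α_i ∧ β_i, dγ_{2k−1} = ψ̄_k ∧ γ_{2k−1} + φ̄_k ∧ γ_{2k}, dγ_{2k} = −φ̄_k ∧ γ_{2k−1} + ψ̄_k ∧ γ_{2k} (where ψ̄_k, φ̄_k are linear combinations of the α_i, and the ψ̄_k are such that no nontrivial linear combination relation forces extra closed forms), the first Lie algebra cohomology H¹(g) is spanned by the classes [α₁],…,[α_s]; in particular dim H¹(g) = s and dim [g,g] = 2t + s. -/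
/-!
The derived algebra `[g, g]` is spanned by the `B`'s and `C`'s. One inclusion holds because all
brackets of basis vectors land there. Conversely `B_j = [A_j, B_j]`, and for each `k` the
genericity condition gives an `i` for which `ad A_i` acts on `span (C_{k,0}, C_{k,1})` as a
rotation-dilation with determinant `ψ_{ik}² + φ_{ik}² ≠ 0`, hence surjectively. The closed 1-forms
are exactly the annihilator of `[g, g]`, which in the dual basis is spanned by the `α`'s.
-/

open Module Submodule

theorem LieAlgebra.lie_mem_of_forall_lie_basis_mem {R L ι : Type*} [CommRing R] [LieRing L]
    [LieAlgebra R L] (b : Module.Basis ι R L) {S : Submodule R L} (h : ∀ i j, ⁅b i, b j⁆ ∈ S)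
    (x y : L) : ⁅x, y⁆ ∈ S := by
  let bracket : L →ₗ[R] L →ₗ[R] L := LinearMap.mk₂ R (⁅·, ·⁆) add_lie smul_lie lie_add lie_smul
  have hle : map₂ bracket ⊤ ⊤ ≤ S := by
    rw [← b.span_eq, map₂_span_span, span_le]
    rintro _ ⟨_, ⟨i, rfl⟩, _, ⟨j, rfl⟩, rfl⟩
    exact h i j
  exact map₂_le.mp hle x trivial y trivial

theorem LieAlgebra.setOf_forall_apply_lie_eq_zero {R L : Type*} [CommRing R] [LieRing L]
    [LieAlgebra R L] :
    {θ : Dual R L | ∀ x y : L, θ ⁅x, y⁆ = 0} =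
      ↑(LieSubmodule.toSubmodule ⁅(⊤ : LieIdeal R L), (⊤ : LieIdeal R L)⁆).dualAnnihilator := by
  ext θ
  rw [SetLike.mem_coe, mem_dualAnnihilator, LieSubmodule.lieIdeal_oper_eq_linear_span']
  constructor
  · refine fun h w hw => (span_le (p := LinearMap.ker θ)).mpr ?_ hw
    rintro _ ⟨x, -, y, -, rfl⟩
    exact h x y
  · exact fun h x y => h _ (subset_span ⟨x, trivial, y, trivial, rfl⟩)

theorem Module.Basis.dualAnnihilator_span_range_inr {R M ι κ : Type*} [CommRing R]
    [AddCommGroup M] [Module R M] [Fintype ι] [Fintype κ] (b : Basis (ι ⊕ κ) R M) :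
    (span R (Set.range fun j => b (Sum.inr j))).dualAnnihilator =
      span R (Set.range fun i => b.coord (Sum.inl i)) := by
  apply le_antisymm
  · intro θ hθ
    rw [mem_dualAnnihilator] at hθ
    rw [← b.sum_dual_apply_smul_coord θ, Fintype.sum_sum_type]
    simp only [hθ _ (subset_span ⟨_, rfl⟩), zero_smul, Finset.sum_const_zero, add_zero]
    exact sum_mem fun i _ => smul_mem _ _ (subset_span ⟨i, rfl⟩)
  · rw [span_le]
    rintro _ ⟨i, rfl⟩
    rw [SetLike.mem_coe, mem_dualAnnihilator]
    refine fun w hw => (span_le (p := LinearMap.ker (b.coord (Sum.inl i)))).mpr ?_ hw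
    rintro _ ⟨j, rfl⟩
    simp

theorem Submodule.mem_of_rotation_mem {K M : Type*} [Field K] [AddCommGroup M] [Module K M]
    (T : Submodule K M) {p q : K} (hpq : p ^ 2 + q ^ 2 ≠ 0) {u v : M}
    (hx : -p • u + q • v ∈ T) (hy : -q • u - p • v ∈ T) : u ∈ T ∧ v ∈ T := by
  have hu : (p ^ 2 + q ^ 2) • u = (-p) • (-p • u + q • v) + (-q) • (-q • u - p • v) := by module
  have hv : (p ^ 2 + q ^ 2) • v = q • (-p • u + q • v) + (-p) • (-q • u - p • v) := by module
  refine ⟨(smul_mem_iff T hpq).mp ?_, (smul_mem_iff T hpq).mp ?_⟩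
  · rw [hu]; exact add_mem (smul_mem _ _ hx) (smul_mem _ _ hy)
  · rw [hv]; exact add_mem (smul_mem _ _ hx) (smul_mem _ _ hy)

namespace OTAlgebra

variable {L : Type*} [LieRing L] [LieAlgebra ℝ L] {s t : ℕ}
  (e : Module.Basis (Fin s ⊕ Fin s ⊕ (Fin t × Fin 2)) ℝ L) (ψ φv : Fin s → Fin t → ℝ)
  (hAA : ∀ i j, ⁅e (Sum.inl i), e (Sum.inl j)⁆ = (0 : L))
  (hAB : ∀ i j, ⁅e (Sum.inl i), e (Sum.inr (Sum.inl j))⁆ =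
    if i = j then e (Sum.inr (Sum.inl j)) else 0)
  (hBB : ∀ i j, ⁅e (Sum.inr (Sum.inl i)), e (Sum.inr (Sum.inl j))⁆ = (0 : L))
  (hBC : ∀ i k ε, ⁅e (Sum.inr (Sum.inl i)), e (Sum.inr (Sum.inr (k, ε)))⁆ = (0 : L))
  (hCC : ∀ k ε k' ε',
    ⁅e (Sum.inr (Sum.inr (k, ε))), e (Sum.inr (Sum.inr (k', ε')))⁆ = (0 : L))
  (hAC1 : ∀ i k, ⁅e (Sum.inl i), e (Sum.inr (Sum.inr (k, 0)))⁆ =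
    -ψ i k • e (Sum.inr (Sum.inr (k, 0))) + φv i k • e (Sum.inr (Sum.inr (k, 1))))
  (hAC2 : ∀ i k, ⁅e (Sum.inl i), e (Sum.inr (Sum.inr (k, 1)))⁆ =
    -φv i k • e (Sum.inr (Sum.inr (k, 0))) - ψ i k • e (Sum.inr (Sum.inr (k, 1))))
  (hgen : ∀ k, ∃ i, ψ i k ≠ 0 ∨ φv i k ≠ 0)

include hAA hAB hBB hBC hCC hAC1 hAC2 in
theorem commutator_le_span_inr :
    LieSubmodule.toSubmodule ⁅(⊤ : LieIdeal ℝ L), (⊤ : LieIdeal ℝ L)⁆ ≤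
      span ℝ (Set.range fun j => e (Sum.inr j)) := by
  set S := span ℝ (Set.range fun j => e (Sum.inr j))
  have hmem : ∀ j, e (Sum.inr j) ∈ S := fun j => subset_span ⟨j, rfl⟩
  have hAC : ∀ i k ε, ⁅e (Sum.inl i), e (Sum.inr (Sum.inr (k, ε)))⁆ ∈ S := by
    intro i k
    refine Fin.forall_fin_two.mpr ⟨?_, ?_⟩
    · rw [hAC1]; exact add_mem (smul_mem _ _ (hmem _)) (smul_mem _ _ (hmem _))
    · rw [hAC2]; exact sub_mem (smul_mem _ _ (hmem _)) (smul_mem _ _ (hmem _))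
  have hA : ∀ i b, ⁅e (Sum.inl i), e b⁆ ∈ S := by
    rintro i (j | j | ⟨k, ε⟩)
    · rw [hAA]; exact zero_mem _
    · rw [hAB]; split_ifs
      exacts [hmem _, zero_mem _]
    · exact hAC i k ε
  rw [LieSubmodule.lieIdeal_oper_eq_linear_span', span_le]
  rintro _ ⟨x, -, y, -, rfl⟩
  refine LieAlgebra.lie_mem_of_forall_lie_basis_mem e ?_ x y
  rintro (i | i | ⟨k, ε⟩) (j | j | ⟨k', ε'⟩)
  all_goals first
    | exact hA _ _
    | rw [← lie_skew, neg_mem_iff]; exact hA _ _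
    | simp [hBB, hBC, hCC]
    | rw [← lie_skew, neg_mem_iff, hBC]; exact zero_mem _

include hAB hAC1 hAC2 hgen in
theorem span_inr_le_commutator :
    span ℝ (Set.range fun j => e (Sum.inr j)) ≤
      LieSubmodule.toSubmodule ⁅(⊤ : LieIdeal ℝ L), (⊤ : LieIdeal ℝ L)⁆ := by
  set T := LieSubmodule.toSubmodule ⁅(⊤ : LieIdeal ℝ L), (⊤ : LieIdeal ℝ L)⁆
  have hlie : ∀ x y : L, ⁅x, y⁆ ∈ T := fun x y =>
    LieSubmodule.lie_mem_lie (LieSubmodule.mem_top x) (LieSubmodule.mem_top y)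
  rw [span_le]
  rintro _ ⟨j | ⟨k, ε⟩, rfl⟩
  · simpa [hAB] using hlie (e (Sum.inl j)) (e (Sum.inr (Sum.inl j)))
  · obtain ⟨i, hi⟩ := hgen k
    have hpq : ψ i k ^ 2 + φv i k ^ 2 ≠ 0 := by rcases hi with h | h <;> positivity
    have hC := T.mem_of_rotation_mem hpq (hAC1 i k ▸ hlie _ _) (hAC2 i k ▸ hlie _ _)
    fin_cases ε
    exacts [hC.1, hC.2]

end OTAlgebra

/-- Let `g` be the Lie algebra with basis `A₁,…,A_s, B₁,…,B_s, C₁,…,C_{2t}`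
whose dual differential satisfies `dα_i = 0`, `dβ_i = −α_i∧β_i`,
`dγ_{2k−1} = ψ̄_k∧γ_{2k−1} + φ̄_k∧γ_{2k}`, `dγ_{2k} = −φ̄_k∧γ_{2k−1} + ψ̄_k∧γ_{2k}`
(equivalently, with the bracket relations below), with generic coefficients (for each `k`
some `(ψ_{ik}, φ_{ik}) ≠ (0,0)`).  Then `H¹(g)` — the space of closed 1-forms, since there
are no exact ones — is spanned by the classes `[α₁],…,[α_s]`; in particular
`dim H¹(g) = s` and `dim [g,g] = 2t + s`. -/
theorem first_cohomology_and_commutator_of_OT_algebra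
    {L : Type*} [LieRing L] [LieAlgebra ℝ L]
    (s t : ℕ) (e : Module.Basis (Fin s ⊕ Fin s ⊕ (Fin t × Fin 2)) ℝ L)
    (ψ φv : Fin s → Fin t → ℝ)
    (hAA : ∀ i j, ⁅e (Sum.inl i), e (Sum.inl j)⁆ = (0 : L))
    (hAB : ∀ i j, ⁅e (Sum.inl i), e (Sum.inr (Sum.inl j))⁆ =
      if i = j then e (Sum.inr (Sum.inl j)) else 0)
    (hBB : ∀ i j, ⁅e (Sum.inr (Sum.inl i)), e (Sum.inr (Sum.inl j))⁆ = (0 : L))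
    (hBC : ∀ i k ε, ⁅e (Sum.inr (Sum.inl i)), e (Sum.inr (Sum.inr (k, ε)))⁆ = (0 : L))
    (hCC : ∀ k ε k' ε',
      ⁅e (Sum.inr (Sum.inr (k, ε))), e (Sum.inr (Sum.inr (k', ε')))⁆ = (0 : L))
    (hAC1 : ∀ i k, ⁅e (Sum.inl i), e (Sum.inr (Sum.inr (k, 0)))⁆ =
      -ψ i k • e (Sum.inr (Sum.inr (k, 0))) + φv i k • e (Sum.inr (Sum.inr (k, 1))))
    (hAC2 : ∀ i k, ⁅e (Sum.inl i), e (Sum.inr (Sum.inr (k, 1)))⁆ =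
      -φv i k • e (Sum.inr (Sum.inr (k, 0))) - ψ i k • e (Sum.inr (Sum.inr (k, 1))))
    (hgen : ∀ k, ∃ i, ψ i k ≠ 0 ∨ φv i k ≠ 0) :
    ({θ : Module.Dual ℝ L | ∀ x y : L, θ ⁅x, y⁆ = 0} =
        ↑(Submodule.span ℝ (Set.range fun i : Fin s => e.coord (Sum.inl i)))) ∧
    Module.finrank ℝ
        ↥(Submodule.span ℝ (Set.range fun i : Fin s => e.coord (Sum.inl i))) = s ∧
    Module.finrank ℝ
        ↥(LieSubmodule.toSubmodule ⁅(⊤ : LieIdeal ℝ L), (⊤ : LieIdeal ℝ L)⁆) =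
      2 * t + s := by
  have hcomm : LieSubmodule.toSubmodule ⁅(⊤ : LieIdeal ℝ L), (⊤ : LieIdeal ℝ L)⁆ =
      span ℝ (Set.range fun j => e (Sum.inr j)) :=
    le_antisymm (OTAlgebra.commutator_le_span_inr e ψ φv hAA hAB hBB hBC hCC hAC1 hAC2)
      (OTAlgebra.span_inr_le_commutator e ψ φv hAB hAC1 hAC2 hgen)
  refine ⟨?_, ?_, ?_⟩
  · rw [LieAlgebra.setOf_forall_apply_lie_eq_zero, hcomm, e.dualAnnihilator_span_range_inr]
  · have hli : LinearIndependent ℝ fun i : Fin s => e.coord (Sum.inl i) := by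
      rw [← e.coe_dualBasis]; exact e.dualBasis.linearIndependent.comp Sum.inl Sum.inl_injective
    rw [finrank_span_eq_card hli, Fintype.card_fin]
  · have hli : LinearIndependent ℝ fun j => e (Sum.inr j) :=
      e.linearIndependent.comp Sum.inr Sum.inr_injective
    rw [hcomm, finrank_span_eq_card hli]
    simp only [Fintype.card_sum, Fintype.card_prod, Fintype.card_fin]
    ring
end

section
/- With g = a ⋉ n (a, n abelian, [a,n] = n) of even total dimension m + n with m < n, for every closed 1-form θ ∈ Λ¹(g*) and every non-degenerate 2-form ω ∈ Λ²(g*) satisfying dω = θ ∧ ω, the twisted cohomology class [ω]_θ ∈ H²_θ(g) is nonzero. -/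
open scoped BigOperators

/-- The Chevalley–Eilenberg differential (trivial coefficients), at the level of functions
on tuples: `(dα)(x₀,…,x_k) = ∑_{i<j} (−1)^{i+j} α(⁅x_i,x_j⁆, x₀,…,x̂_i,…,x̂_j,…,x_k)`. -/
noncomputable def ceDiff (L : Type*) [LieRing L] :
    ∀ (k : ℕ), ((Fin k → L) → ℝ) → ((Fin (k + 1) → L) → ℝ)
  | 0, _ => 0
  | (m + 1), α => fun x =>
      ∑ j : Fin (m + 2), ∑ i : Fin (m + 2),
        if hij : (i : ℕ) < (j : ℕ) then
          (-1 : ℝ) ^ ((i : ℕ) + (j : ℕ)) *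
            α (Fin.cons ⁅x i, x j⁆ (fun m' : Fin m =>
              x (j.succAbove
                ((⟨(i : ℕ), lt_of_lt_of_le hij (Nat.lt_succ_iff.mp j.isLt)⟩ :
                  Fin (m + 1)).succAbove m'))))
        else 0

/-- Wedge product with a 1-form, at the level of functions on tuples:
`(θ ∧ α)(x₀,…,x_k) = ∑_i (−1)^i θ(x_i) α(x₀,…,x̂_i,…,x_k)`. -/
noncomputable def oneWedge (L : Type*) {k : ℕ} (θ : L → ℝ) (α : (Fin k → L) → ℝ) :
    (Fin (k + 1) → L) → ℝ :=
  fun x => ∑ i : Fin (k + 1), (-1 : ℝ) ^ (i : ℕ) * θ (x i) * α (i.removeNth x)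

/-- A `k`-form has pure bidegree `(p, k−p)` with respect to a decomposition `V = A ⊕ N`
iff it vanishes on every tuple of vectors from `A ∪ N` in which the number of entries
belonging to `A` is not `p`. -/
def HasPureADegree {L : Type*} [AddCommGroup L] [Module ℝ L]
    (A N : Submodule ℝ L) {k : ℕ} (α : (Fin k → L) → ℝ) (p : ℕ) : Prop :=
  ∀ x : Fin k → L, (∀ i, x i ∈ A ∨ x i ∈ N) →
    Nat.card {i : Fin k // x i ∈ A} ≠ p → α x = 0

/-!
Since `θ` is closed it kills `[g, g] ⊇ [a, n] = n`, and `n` is abelian, so every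
`d_θ`-exact 2-form `dη − θ ∧ η` vanishes on `n × n`. A non-degenerate 2-form on `g` admits no
isotropic subspace of dimension larger than `dim g / 2`, while `dim n > (m + n) / 2`.
-/

theorem Matrix.update_vecCons_two_zero {α : Type*} (a b c : α) :
    Function.update ![a, b] 0 c = ![c, b] := by
  simp only [Matrix.vecCons, Fin.update_cons_zero]

theorem Matrix.update_vecCons_two_one {α : Type*} (a b c : α) :
    Function.update ![a, b] 1 c = ![a, c] := by
  simp only [Matrix.vecCons, ← Fin.succ_zero_eq_one, ← Fin.cons_update, Fin.update_cons_zero]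

section TwoForms

variable {R M : Type*} [CommRing R] [AddCommGroup M] [Module R M]

def AlternatingMap.toBilinForm (ω : M [⋀^Fin 2]→ₗ[R] R) : LinearMap.BilinForm R M :=
  LinearMap.mk₂ R (fun u v => ω ![u, v])
    (fun x y v => by
      simpa only [Matrix.update_vecCons_two_zero] using ω.map_update_add ![x, v] 0 x y)
    (fun c x v => by
      simpa only [Matrix.update_vecCons_two_zero] using ω.map_update_smul ![x, v] 0 c x)
    (fun u x y => by
      simpa only [Matrix.update_vecCons_two_one] using ω.map_update_add ![u, x] 1 x y)
    (fun c u x => by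
      simpa only [Matrix.update_vecCons_two_one] using ω.map_update_smul ![u, x] 1 c x)

theorem AlternatingMap.toBilinForm_isAlt (ω : M [⋀^Fin 2]→ₗ[R] R) : ω.toBilinForm.IsAlt :=
  fun x => ω.map_eq_zero_of_eq ![x, x] (i := 0) (j := 1) rfl (by decide)

end TwoForms

theorem LinearMap.BilinForm.two_mul_finrank_le_of_le_orthogonal {K V : Type*} [Field K]
    [AddCommGroup V] [Module K V] [FiniteDimensional K V] {B : LinearMap.BilinForm K V}
    (hB : B.Nondegenerate) {W : Submodule K V} (hW : W ≤ B.orthogonal W) :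
    2 * Module.finrank K W ≤ Module.finrank K V := by
  have hle := Submodule.finrank_mono hW
  rw [LinearMap.BilinForm.finrank_orthogonal hB] at hle
  have := Submodule.finrank_le W
  omega

section TwistedDifferential

variable (L : Type*)

theorem oneWedge_one_apply (θ η : L → ℝ) (u v : L) :
    oneWedge L θ (fun x => η (x 0)) ![u, v] = θ u * η v - θ v * η u := by
  simp [oneWedge, Fin.sum_univ_two, Fin.removeNth, sub_eq_add_neg]

variable [LieRing L]

theorem ceDiff_one_apply (η : L → ℝ) (u v : L) :
    ceDiff L 1 (fun x => η (x 0)) ![u, v] = -η ⁅u, v⁆ := by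
  simp [ceDiff, Fin.sum_univ_two]

variable {L} [LieAlgebra ℝ L]

theorem twistedDiff_one_apply_eq_zero (θ : L → ℝ) (η : Module.Dual ℝ L) {u v : L}
    (huv : ⁅u, v⁆ = 0) (hu : θ u = 0) (hv : θ v = 0) :
    (ceDiff L 1 (fun x => η (x 0)) - oneWedge L θ (fun x => η (x 0)) : (Fin 2 → L) → ℝ)
      ![u, v] = 0 := by
  simp [ceDiff_one_apply, oneWedge_one_apply, huv, hu, hv]

end TwistedDifferential

theorem lcs_class_nonzero_in_twisted_cohomology_general
    {L : Type*} [LieRing L] [LieAlgebra ℝ L] [FiniteDimensional ℝ L]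
    (A N : Submodule ℝ L) (hc : IsCompl A N)
    (hN : ∀ x ∈ N, ∀ y ∈ N, ⁅x, y⁆ = (0 : L))
    (hspan : Submodule.span ℝ {z : L | ∃ x ∈ A, ∃ y ∈ N, z = ⁅x, y⁆} = N)
    (m n : ℕ) (hm : Module.finrank ℝ A = m) (hn : Module.finrank ℝ N = n)
    (hmn : m < n)
    (θ : Module.Dual ℝ L) (hθclosed : ∀ x y : L, θ ⁅x, y⁆ = 0)
    (ω : AlternatingMap ℝ L ℝ (Fin 2))
    (hnondeg : ∀ v : L, v ≠ 0 → ∃ w : L, ω ![v, w] ≠ 0) :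
    ∀ η : Module.Dual ℝ L,
      ceDiff L 1 (fun x => η (x 0)) - oneWedge L (⇑θ) (fun x => η (x 0)) ≠ ⇑ω := by
  intro η hexact
  have hθN : N ≤ LinearMap.ker θ := by
    rw [← hspan, Submodule.span_le]
    rintro _ ⟨x, -, y, -, rfl⟩
    exact hθclosed x y
  have hB : ω.toBilinForm.Nondegenerate :=
    ω.toBilinForm_isAlt.isRefl.nondegenerate_iff_separatingLeft.mpr fun v hv => by
      by_contra hv0
      obtain ⟨w, hw⟩ := hnondeg v hv0
      exact hw (hv w)
  have hiso : N ≤ ω.toBilinForm.orthogonal N := fun v hv u hu => by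
    change ω ![u, v] = 0
    rw [← hexact]
    exact twistedDiff_one_apply_eq_zero θ η (hN u hu v hv) (hθN hu) (hθN hv)
  have hdim := LinearMap.BilinForm.two_mul_finrank_le_of_le_orthogonal hB hiso
  rw [← Submodule.finrank_add_eq_of_isCompl hc] at hdim
  omega

/-- For `g = a ⋉ n` (`a`, `n` abelian, `[a,n] = n`) of even total dimension
`m + n` with `m = dim a < dim n = n`, every closed 1-form `θ` and non-degenerate 2-form
`ω` with `dω = θ ∧ ω` give a nonzero twisted cohomology class `[ω]_θ ∈ H²_θ(g)`:
`ω` is not `d_θ`-exact. -/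
theorem lcs_class_nonzero_in_twisted_cohomology
    {L : Type*} [LieRing L] [LieAlgebra ℝ L] [FiniteDimensional ℝ L]
    (A N : Submodule ℝ L) (hc : IsCompl A N)
    (hA : ∀ x ∈ A, ∀ y ∈ A, ⁅x, y⁆ = (0 : L))
    (hN : ∀ x ∈ N, ∀ y ∈ N, ⁅x, y⁆ = (0 : L))
    (hmix : ∀ x ∈ A, ∀ y ∈ N, ⁅x, y⁆ ∈ N)
    (hspan : Submodule.span ℝ {z : L | ∃ x ∈ A, ∃ y ∈ N, z = ⁅x, y⁆} = N)
    (m n : ℕ) (hm : Module.finrank ℝ A = m) (hn : Module.finrank ℝ N = n)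
    (hmn : m < n) (heven : Even (m + n))
    (θ : Module.Dual ℝ L) (hθclosed : ∀ x y : L, θ ⁅x, y⁆ = 0)
    (ω : AlternatingMap ℝ L ℝ (Fin 2))
    (hnondeg : ∀ v : L, v ≠ 0 → ∃ w : L, ω ![v, w] ≠ 0)
    (hlcs : ceDiff L 2 ⇑ω = oneWedge L (⇑θ) ⇑ω) :
    ∀ η : Module.Dual ℝ L,
      ceDiff L 1 (fun x => η (x 0)) - oneWedge L (⇑θ) (fun x => η (x 0)) ≠ ⇑ω :=
  lcs_class_nonzero_in_twisted_cohomology_general A N hc hN hspan m n hm hn hmn θ hθclosed ω hnondeg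
end

section
/- On a nilpotent Lie algebra g, for every nonzero closed 1-form θ, any 2-form ω with d_θω = 0 on g is d_θ-exact; i.e., H²_θ(g) = 0. -/
open scoped BigOperators

section DixAux

set_option linter.unusedSectionVars false

variable {L : Type*} [LieRing L] [LieAlgebra ℝ L]

lemma dix_upd0 (a c y : L) : Function.update ![a, y] 0 c = ![c, y] := by
  funext i; fin_cases i <;> simp [Function.update]

lemma dix_upd1 (a c y : L) : Function.update ![y, a] 1 c = ![y, c] := by
  funext i; fin_cases i <;> simp [Function.update]

/-- The bilinear form underlying an alternating 2-form. -/
noncomputable def dixB (ω : AlternatingMap ℝ L ℝ (Fin 2)) : L →ₗ[ℝ] Module.Dual ℝ L :=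
  LinearMap.mk₂ ℝ (fun x y => ω ![x, y])
    (fun a b y => by
      show ω ![a + b, y] = ω ![a, y] + ω ![b, y]
      rw [← dix_upd0 a (a + b) y, ω.map_update_add, dix_upd0, dix_upd0])
    (fun c a y => by
      show ω ![c • a, y] = c • ω ![a, y]
      rw [← dix_upd0 a (c • a) y, ω.map_update_smul, dix_upd0])
    (fun y a b => by
      show ω ![y, a + b] = ω ![y, a] + ω ![y, b]
      rw [← dix_upd1 a (a + b) y, ω.map_update_add, dix_upd1, dix_upd1])
    (fun c y a => by
      show ω ![y, c • a] = c • ω ![y, a]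
      rw [← dix_upd1 a (c • a) y, ω.map_update_smul, dix_upd1])

lemma dixB_apply (ω : AlternatingMap ℝ L ℝ (Fin 2)) (x y : L) :
    dixB ω x y = ω ![x, y] := rfl

lemma dixB_skew (ω : AlternatingMap ℝ L ℝ (Fin 2)) (x y : L) :
    dixB ω y x = - dixB ω x y := by
  have h := ω.map_swap (v := ![x, y]) (i := (0 : Fin 2)) (j := 1) (by decide)
  have h2 : (![x, y] ∘ Equiv.swap (0 : Fin 2) 1) = ![y, x] := by
    funext i; fin_cases i <;> simp [Equiv.swap_apply_def]
  rw [h2] at h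
  simpa [dixB_apply] using h

lemma dix_eta2 (ω : AlternatingMap ℝ L ℝ (Fin 2)) (v : Fin 2 → L) :
    ω v = dixB ω (v 0) (v 1) := by
  rw [dixB_apply]; congr 1; funext i; fin_cases i <;> rfl

/-- Left Lie-derivative operator on bilinear forms. -/
noncomputable def dixAL (e : L) : Module.End ℝ (L →ₗ[ℝ] Module.Dual ℝ L) where
  toFun f := f ∘ₗ (LieModule.toEnd ℝ L L e)
  map_add' f g := by ext x y; simp
  map_smul' c f := by ext x y; simp

/-- Right Lie-derivative operator on bilinear forms. -/
noncomputable def dixAR (e : L) : Module.End ℝ (L →ₗ[ℝ] Module.Dual ℝ L) where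
  toFun f :=
    { toFun := fun x => (f x) ∘ₗ (LieModule.toEnd ℝ L L e)
      map_add' := fun a b => by ext y; simp
      map_smul' := fun c a => by ext y; simp }
  map_add' f g := by ext x y; simp
  map_smul' c f := by ext x y; simp

lemma dixAL_apply (e : L) (f : L →ₗ[ℝ] Module.Dual ℝ L) (x y : L) :
    dixAL e f x y = f ⁅e, x⁆ y := rfl

lemma dixAR_apply (e : L) (f : L →ₗ[ℝ] Module.Dual ℝ L) (x y : L) :
    dixAR e f x y = f x ⁅e, y⁆ := rfl

lemma dixAL_pow (e : L) (n : ℕ) (f : L →ₗ[ℝ] Module.Dual ℝ L) (x y : L) :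
    ((dixAL e ^ n) f) x y = f (((LieModule.toEnd ℝ L L e) ^ n) x) y := by
  induction n generalizing f x with
  | zero => simp
  | succ n ih =>
    rw [pow_succ', Module.End.mul_apply, dixAL_apply, ih, pow_succ, Module.End.mul_apply,
      LieModule.toEnd_apply_apply]

lemma dixAR_pow (e : L) (n : ℕ) (f : L →ₗ[ℝ] Module.Dual ℝ L) (x y : L) :
    ((dixAR e ^ n) f) x y = f x (((LieModule.toEnd ℝ L L e) ^ n) y) := by
  induction n generalizing f y with
  | zero => simp
  | succ n ih =>
    rw [pow_succ', Module.End.mul_apply, dixAR_apply, ih, pow_succ, Module.End.mul_apply,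
      LieModule.toEnd_apply_apply]

lemma dix_commute (e : L) : Commute (dixAL e) (dixAR e) := by
  ext f x y; rfl

/-- The twisted Lie-derivative (Cartan) operator `A = L_e` on bilinear forms. -/
noncomputable def dixA (e : L) : Module.End ℝ (L →ₗ[ℝ] Module.Dual ℝ L) :=
  dixAL e + dixAR e

lemma dixA_apply (e : L) (f : L →ₗ[ℝ] Module.Dual ℝ L) (x y : L) :
    dixA e f x y = f ⁅e, x⁆ y + f x ⁅e, y⁆ := rfl

lemma dixA_nilpotent [FiniteDimensional ℝ L] [LieRing.IsNilpotent L] (e : L) :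
    IsNilpotent (dixA e) := by
  obtain ⟨N, hN⟩ := LieModule.isNilpotent_toEnd_of_isNilpotent ℝ L L e
  have hL : IsNilpotent (dixAL e) := ⟨N, by ext f x y; rw [dixAL_pow, hN]; simp⟩
  have hR : IsNilpotent (dixAR e) := ⟨N, by ext f x y; rw [dixAR_pow, hN]; simp⟩
  exact (dix_commute e).isNilpotent_add hL hR

/-- `d_θ`-closedness of a bilinear form, written pointwise. -/
def DixClosed (θ : Module.Dual ℝ L) (f : L →ₗ[ℝ] Module.Dual ℝ L) : Prop :=
  ∀ x y z : L, -f ⁅x, y⁆ z + f ⁅x, z⁆ y - f ⁅y, z⁆ x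
    - θ x * f y z + θ y * f x z - θ z * f x y = 0

def DixSkew (f : L →ₗ[ℝ] Module.Dual ℝ L) : Prop := ∀ x y : L, f y x = - f x y

lemma DixSkew.dixA {e : L} {f : L →ₗ[ℝ] Module.Dual ℝ L} (hf : DixSkew f) :
    DixSkew (dixA e f) := by
  intro x y
  rw [dixA_apply, dixA_apply, hf ⁅e, x⁆ y, hf x ⁅e, y⁆]
  ring

lemma DixClosed.dixA {θ : Module.Dual ℝ L} (hθc : ∀ x y : L, θ ⁅x, y⁆ = 0)
    {e : L} {f : L →ₗ[ℝ] Module.Dual ℝ L} (hf : DixClosed θ f) :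
    DixClosed θ (dixA e f) := by
  intro x y z
  have h1 := hf ⁅e, x⁆ y z
  have h2 := hf x ⁅e, y⁆ z
  have h3 := hf x y ⁅e, z⁆
  simp only [hθc, zero_mul, sub_zero, zero_sub, add_zero] at h1 h2 h3
  simp only [dixA_apply]
  rw [show ⁅e, ⁅x, y⁆⁆ = ⁅⁅e, x⁆, y⁆ + ⁅x, ⁅e, y⁆⁆ from leibniz_lie e x y,
    show ⁅e, ⁅x, z⁆⁆ = ⁅⁅e, x⁆, z⁆ + ⁅x, ⁅e, z⁆⁆ from leibniz_lie e x z,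
    show ⁅e, ⁅y, z⁆⁆ = ⁅⁅e, y⁆, z⁆ + ⁅y, ⁅e, z⁆⁆ from leibniz_lie e y z]
  simp only [map_add, LinearMap.add_apply]
  linear_combination h1 + h2 + h3

lemma DixSkew.zero : DixSkew (0 : L →ₗ[ℝ] Module.Dual ℝ L) := by
  intro x y; simp

lemma DixSkew.add {f g : L →ₗ[ℝ] Module.Dual ℝ L} (hf : DixSkew f) (hg : DixSkew g) :
    DixSkew (f + g) := by
  intro x y
  simp only [LinearMap.add_apply]
  rw [hf, hg]; ring

lemma DixSkew.smul (c : ℝ) {f : L →ₗ[ℝ] Module.Dual ℝ L} (hf : DixSkew f) :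
    DixSkew (c • f) := by
  intro x y
  simp only [LinearMap.smul_apply, smul_eq_mul]
  rw [hf]; ring

lemma DixClosed.zero (θ : Module.Dual ℝ L) : DixClosed θ (0 : L →ₗ[ℝ] Module.Dual ℝ L) := by
  intro x y z; simp

lemma DixClosed.add {θ : Module.Dual ℝ L} {f g : L →ₗ[ℝ] Module.Dual ℝ L}
    (hf : DixClosed θ f) (hg : DixClosed θ g) : DixClosed θ (f + g) := by
  intro x y z
  simp only [LinearMap.add_apply]
  linear_combination hf x y z + hg x y z

lemma DixClosed.smul {θ : Module.Dual ℝ L} (c : ℝ) {f : L →ₗ[ℝ] Module.Dual ℝ L}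
    (hf : DixClosed θ f) : DixClosed θ (c • f) := by
  intro x y z
  simp only [LinearMap.smul_apply, smul_eq_mul]
  linear_combination c * hf x y z

lemma DixSkew.powA {e : L} {f : L →ₗ[ℝ] Module.Dual ℝ L} (hf : DixSkew f) (n : ℕ) :
    DixSkew ((_root_.dixA e ^ n) f) := by
  induction n with
  | zero => simpa using hf
  | succ n ih =>
    rw [pow_succ', Module.End.mul_apply]
    exact DixSkew.dixA ih

lemma DixClosed.powA {θ : Module.Dual ℝ L} (hθc : ∀ x y : L, θ ⁅x, y⁆ = 0) {e : L}
    {f : L →ₗ[ℝ] Module.Dual ℝ L} (hf : DixClosed θ f) (n : ℕ) :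
    DixClosed θ ((_root_.dixA e ^ n) f) := by
  induction n with
  | zero => simpa using hf
  | succ n ih =>
    rw [pow_succ', Module.End.mul_apply]
    exact DixClosed.dixA hθc ih

lemma dix_telescope (e : L) (B : L →ₗ[ℝ] Module.Dual ℝ L) (M : ℕ) :
    dixA e (∑ n ∈ Finset.range M, ((-1 : ℝ) ^ (n + 1)) • ((dixA e ^ n) B))
      + ∑ n ∈ Finset.range M, ((-1 : ℝ) ^ (n + 1)) • ((dixA e ^ n) B)
    = -B + ((-1 : ℝ) ^ M) • ((dixA e ^ M) B) := by
  induction M with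
  | zero => simp; abel
  | succ M ih =>
    rw [Finset.sum_range_succ, map_add, map_smul]
    rw [show dixA e ((dixA e ^ M) B) = (dixA e ^ (M + 1)) B from by
      rw [pow_succ', Module.End.mul_apply]]
    calc dixA e (∑ n ∈ Finset.range M, ((-1 : ℝ) ^ (n + 1)) • ((dixA e ^ n) B))
          + (-1 : ℝ) ^ (M + 1) • (dixA e ^ (M + 1)) B
          + (∑ n ∈ Finset.range M, ((-1 : ℝ) ^ (n + 1)) • ((dixA e ^ n) B)
            + (-1 : ℝ) ^ (M + 1) • (dixA e ^ M) B)
        = (dixA e (∑ n ∈ Finset.range M, ((-1 : ℝ) ^ (n + 1)) • ((dixA e ^ n) B))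
            + ∑ n ∈ Finset.range M, ((-1 : ℝ) ^ (n + 1)) • ((dixA e ^ n) B))
          + ((-1 : ℝ) ^ (M + 1) • (dixA e ^ (M + 1)) B
            + (-1 : ℝ) ^ (M + 1) • (dixA e ^ M) B) := by abel
      _ = (-B + (-1 : ℝ) ^ M • (dixA e ^ M) B)
          + ((-1 : ℝ) ^ (M + 1) • (dixA e ^ (M + 1)) B
            + (-1 : ℝ) ^ (M + 1) • (dixA e ^ M) B) := by rw [ih]
      _ = -B + (-1 : ℝ) ^ (M + 1) • (dixA e ^ (M + 1)) B := by
          rw [pow_succ]; module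

lemma dix_homotopy {θ : Module.Dual ℝ L} {e : L} (he : θ e = 1)
    {σ B : L →ₗ[ℝ] Module.Dual ℝ L} (hσc : DixClosed θ σ) (hσs : DixSkew σ)
    (hT : dixA e σ + σ = -B) (x y : L) :
    -(σ e) ⁅x, y⁆ - θ x * σ e y + θ y * σ e x = B x y := by
  have hc := hσc e x y
  rw [he, one_mul] at hc
  have hs1 := hσs ⁅x, y⁆ e
  have hs2 := hσs x ⁅e, y⁆
  have hA : σ ⁅e, x⁆ y + σ x ⁅e, y⁆ + σ x y = -(B x y) := by
    have h := DFunLike.congr_fun (DFunLike.congr_fun hT x) y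
    simp only [LinearMap.add_apply, LinearMap.neg_apply, dixA_apply] at h
    linear_combination h
  linear_combination -hc - hs1 + hs2 - hA

lemma dix_ceDiff1 (α : (Fin 1 → L) → ℝ) (v : Fin 2 → L) :
    ceDiff L 1 α v = -α ![⁅v 0, v 1⁆] := by
  show (∑ j : Fin 2, ∑ i : Fin 2, _) = _
  rw [Fin.sum_univ_succ, Fin.sum_univ_succ, Fin.sum_univ_succ, Fin.sum_univ_succ,
    Fin.sum_univ_succ]
  norm_num
  congr 1
  funext i
  fin_cases i
  rfl

lemma dix_oneWedge1 (θ : L → ℝ) (α : (Fin 1 → L) → ℝ) (v : Fin 2 → L) :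
    oneWedge L θ α v = θ (v 0) * α ![v 1] - θ (v 1) * α ![v 0] := by
  show (∑ i : Fin 2, _) = _
  rw [Fin.sum_univ_succ, Fin.sum_univ_succ]
  norm_num [Fin.removeNth]
  rw [show Fin.tail v = ![v 1] from by funext i; fin_cases i; rfl,
    show Fin.removeNth 1 v = ![v 0] from by funext i; fin_cases i; rfl]
  ring

lemma dix_ceDiff2 (β : (Fin 2 → L) → ℝ) (v : Fin 3 → L) :
    ceDiff L 2 β v = -β ![⁅v 0, v 1⁆, v 2] + β ![⁅v 0, v 2⁆, v 1] - β ![⁅v 1, v 2⁆, v 0] := by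
  show (∑ j : Fin 3, ∑ i : Fin 3, _) = _
  rw [Fin.sum_univ_succ, Fin.sum_univ_succ, Fin.sum_univ_succ, Fin.sum_univ_succ,
    Fin.sum_univ_succ, Fin.sum_univ_succ, Fin.sum_univ_succ, Fin.sum_univ_succ,
    Fin.sum_univ_succ, Fin.sum_univ_succ, Fin.sum_univ_succ, Fin.sum_univ_succ]
  norm_num
  rw [show (Fin.cons ⁅v 0, v 1⁆ fun m' : Fin 1 => v m'.succ.succ) = ![⁅v 0, v 1⁆, v 2] from by
      funext i; fin_cases i <;> rfl,
    show (Fin.cons ⁅v 0, v 2⁆ fun m' : Fin 1 => v (Fin.succAbove 2 m'.succ))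
        = ![⁅v 0, v 2⁆, v 1] from by
      funext i; fin_cases i <;> rfl,
    show (Fin.cons ⁅v 1, v 2⁆ fun m' : Fin 1 => v (Fin.succAbove 2 (Fin.succAbove 1 m')))
        = ![⁅v 1, v 2⁆, v 0] from by
      funext i; fin_cases i <;> rfl]
  ring

lemma dix_oneWedge2 (θ : L → ℝ) (β : (Fin 2 → L) → ℝ) (v : Fin 3 → L) :
    oneWedge L θ β v
      = θ (v 0) * β ![v 1, v 2] - θ (v 1) * β ![v 0, v 2] + θ (v 2) * β ![v 0, v 1] := by
  show (∑ i : Fin 3, _) = _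
  rw [Fin.sum_univ_succ, Fin.sum_univ_succ, Fin.sum_univ_succ]
  norm_num [Fin.removeNth]
  rw [show Fin.tail v = ![v 1, v 2] from by funext i; fin_cases i <;> rfl,
    show Fin.removeNth 1 v = ![v 0, v 2] from by funext i; fin_cases i <;> rfl,
    show Fin.removeNth 2 v = ![v 0, v 1] from by funext i; fin_cases i <;> rfl]
  ring

end DixAux

/-- Dixmier, degree 2: On a finite-dimensional nilpotent real Lie algebra
`g`, for every nonzero closed 1-form `θ`, every 2-form `ω` with `d_θ ω = 0` is
`d_θ`-exact; i.e. `H²_θ(g) = 0`. -/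
theorem twisted_cohomology_degree_two_trivial_of_nilpotent
    {L : Type*} [LieRing L] [LieAlgebra ℝ L] [FiniteDimensional ℝ L]
    [LieRing.IsNilpotent L]
    (θ : Module.Dual ℝ L) (hθ0 : θ ≠ 0) (hθclosed : ∀ x y : L, θ ⁅x, y⁆ = 0)
    (ω : AlternatingMap ℝ L ℝ (Fin 2))
    (hω : ceDiff L 2 ⇑ω - oneWedge L (⇑θ) ⇑ω = 0) :
    ∃ η : Module.Dual ℝ L,
      ceDiff L 1 (fun x => η (x 0)) - oneWedge L (⇑θ) (fun x => η (x 0)) = ⇑ω := by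
  -- choose `e` with `θ e = 1`
  obtain ⟨x₀, hx₀⟩ : ∃ x : L, θ x ≠ 0 := by
    by_contra h
    push_neg at h
    exact hθ0 (LinearMap.ext fun x => by simpa using h x)
  set e : L := (θ x₀)⁻¹ • x₀ with he_def
  have he : θ e = 1 := by
    rw [he_def, map_smul, smul_eq_mul, inv_mul_cancel₀ hx₀]
  set B : L →ₗ[ℝ] Module.Dual ℝ L := dixB ω with hB_def
  -- the closedness hypothesis, pointwise
  have hBc : DixClosed θ B := by
    intro x y z
    have h := congrFun hω ![x, y, z]
    simp only [Pi.sub_apply, Pi.zero_apply, dix_ceDiff2, dix_oneWedge2,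
      Matrix.cons_val_zero, Matrix.cons_val_one, Matrix.head_cons,
      Matrix.cons_val_two, Matrix.tail_cons] at h
    simp only [hB_def, dixB_apply]
    linear_combination h
  have hBs : DixSkew B := fun x y => dixB_skew ω x y
  -- nilpotency of the Lie-derivative operator
  obtain ⟨M, hM⟩ := dixA_nilpotent (L := L) e
  set σ : L →ₗ[ℝ] Module.Dual ℝ L :=
    ∑ n ∈ Finset.range M, ((-1 : ℝ) ^ (n + 1)) • ((dixA e ^ n) B) with hσ_def
  have hσc : DixClosed θ σ := by
    rw [hσ_def]
    refine Finset.sum_induction _ (DixClosed θ) (fun a b ha hb => ha.add hb)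
      (DixClosed.zero θ) (fun n _ => DixClosed.smul _ (DixClosed.powA hθclosed hBc n))
  have hσs : DixSkew σ := by
    rw [hσ_def]
    refine Finset.sum_induction _ DixSkew (fun a b ha hb => ha.add hb)
      DixSkew.zero (fun n _ => DixSkew.smul _ (DixSkew.powA hBs n))
  have hT : dixA e σ + σ = -B := by
    rw [hσ_def, dix_telescope, hM]
    simp
  refine ⟨σ e, ?_⟩
  funext v
  rw [Pi.sub_apply, dix_ceDiff1, dix_oneWedge1, dix_eta2 ω v]
  have h := dix_homotopy he hσc hσs hT (v 0) (v 1)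
  simp only [Matrix.cons_val_zero, Matrix.cons_val_one, Matrix.head_cons]
  linear_combination h
end
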